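/- arXiv:0810.4802 — 3 statements merged into one kernel-verified Lean document; each statement's English description precedes it below -/
import Mathlib

section
/- Let X ~ χ²_L and λ > 1. Then E[X · 1{X ≥ λL}] ≤ λL · exp(-(L/2)(λ - log λ - 1)). -/
/-!
For `0 ≤ s` the indicator of `{X ≥ a}` is at most `exp (s (X - a))`, so
`E[X 1{X ≥ a}] ≤ exp (-s a) E[X exp (s X)]`, and `E[X exp (s X)]` is the derivative of the
moment generating function `(1 - 2s)^(-L/2)` of `χ²_L`, namely `L (1 - 2s)^(-L/2 - 1)`.
The choice `s = (λ - 1) / (2λ)`, for which `1 - 2s = λ⁻¹`, gives the bound.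
-/

open Real MeasureTheory ProbabilityTheory Finset
open scoped Topology

lemma gaussianPDFReal_zero_one_mul_exp_mul_sq (t x : ℝ) :
    gaussianPDFReal 0 1 x * exp (t * x ^ 2) = (√(2 * π))⁻¹ * exp (-(1 / 2 - t) * x ^ 2) := by
  simp only [gaussianPDFReal, NNReal.coe_one, mul_one, sub_zero, mul_assoc, ← exp_add]
  ring_nf

lemma integrable_exp_mul_sq_gaussianReal {t : ℝ} (ht : t < 1 / 2) :
    Integrable (fun x ↦ exp (t * x ^ 2)) (gaussianReal 0 1) := by
  rw [gaussianReal_of_var_ne_zero 0 one_ne_zero,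
    integrable_withDensity_iff_integrable_smul' (measurable_gaussianPDF 0 1)
      (.of_forall fun _ ↦ gaussianPDF_lt_top)]
  simp only [toReal_gaussianPDF, smul_eq_mul, gaussianPDFReal_zero_one_mul_exp_mul_sq]
  exact (integrable_exp_neg_mul_sq (by linarith)).const_mul _

lemma mgf_sq_gaussianReal {t : ℝ} (ht : t < 1 / 2) :
    mgf (fun x ↦ x ^ 2) (gaussianReal 0 1) t = (1 - 2 * t) ^ (-(1 / 2 : ℝ)) := by
  rw [mgf, integral_gaussianReal_eq_integral_smul one_ne_zero]
  simp only [smul_eq_mul, gaussianPDFReal_zero_one_mul_exp_mul_sq]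
  rw [integral_const_mul, integral_gaussian, ← sqrt_inv, ← sqrt_mul (by positivity),
    rpow_neg (by linarith), ← sqrt_eq_rpow, ← sqrt_inv]
  congr 1
  field_simp

lemma setIntegral_le_exp_mul_integral_mul_exp {Ω : Type*} {mΩ : MeasurableSpace Ω}
    {μ : Measure Ω} {X : Ω → ℝ} (hX : Measurable X) (hX0 : 0 ≤ X) {s : ℝ} (hs : 0 ≤ s) (a : ℝ)
    (hint : Integrable (fun ω ↦ X ω * exp (s * X ω)) μ) :
    ∫ ω in {ω | a ≤ X ω}, X ω ∂μ ≤ exp (-(s * a)) * μ[fun ω ↦ X ω * exp (s * X ω)] := by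
  have hshift : (fun ω ↦ X ω * exp (s * (X ω - a))) =
      fun ω ↦ exp (-(s * a)) * (X ω * exp (s * X ω)) := by
    ext ω
    rw [mul_sub, sub_eq_add_neg, exp_add]
    ring
  rw [← integral_const_mul, ← hshift, ← integral_indicator (measurableSet_le measurable_const hX)]
  refine integral_mono_of_nonneg (.of_forall (Set.indicator_nonneg fun ω _ ↦ hX0 ω))
    (by rw [hshift]; exact hint.const_mul _) (.of_forall fun ω ↦ ?_)
  by_cases hω : a ≤ X ω
  · rw [Set.indicator_of_mem (s := {ω | a ≤ X ω}) hω]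
    exact le_mul_of_one_le_right (hX0 ω) (one_le_exp (mul_nonneg hs (sub_nonneg.2 hω)))
  · rw [Set.indicator_of_notMem (s := {ω | a ≤ X ω}) hω]
    exact mul_nonneg (hX0 ω) (exp_pos _).le

namespace ProbabilityTheory

variable {ι Ω : Type*} {mΩ : MeasurableSpace Ω} {μ : Measure Ω} {Z : ι → Ω → ℝ}

lemma iIndepFun.sq (hindep : iIndepFun Z μ) : iIndepFun (fun i ω ↦ Z i ω ^ 2) μ :=
  hindep.comp (fun _ x ↦ x ^ 2) fun _ ↦ by fun_prop

variable [Fintype ι] {t : ℝ}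

lemma mem_integrableExpSet_sum_sq (hmeas : ∀ i, Measurable (Z i)) (hindep : iIndepFun Z μ)
    (hgauss : ∀ i, μ.map (Z i) = gaussianReal 0 1) (ht : t < 1 / 2) :
    t ∈ integrableExpSet (fun ω ↦ ∑ i, Z i ω ^ 2) μ := by
  have := hindep.isProbabilityMeasure
  have h := hindep.sq.integrable_exp_mul_sum (t := t) (s := univ)
    (fun i ↦ (hmeas i).pow_const 2) fun i _ ↦ by
      have h := integrable_exp_mul_sq_gaussianReal ht
      rwa [← hgauss i, integrable_map_measure (by fun_prop) (hmeas i).aemeasurable] at h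
  rwa [Finset.sum_fn] at h

lemma mem_interior_integrableExpSet_sum_sq (hmeas : ∀ i, Measurable (Z i))
    (hindep : iIndepFun Z μ) (hgauss : ∀ i, μ.map (Z i) = gaussianReal 0 1) (ht : t < 1 / 2) :
    t ∈ interior (integrableExpSet (fun ω ↦ ∑ i, Z i ω ^ 2) μ) :=
  interior_maximal (fun _ hu ↦ mem_integrableExpSet_sum_sq hmeas hindep hgauss hu) isOpen_Iio ht

lemma mgf_sum_sq (hmeas : ∀ i, Measurable (Z i)) (hindep : iIndepFun Z μ)
    (hgauss : ∀ i, μ.map (Z i) = gaussianReal 0 1) (ht : t < 1 / 2) :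
    mgf (fun ω ↦ ∑ i, Z i ω ^ 2) μ t = (1 - 2 * t) ^ (-(Fintype.card ι / 2 : ℝ)) := by
  have hsq : ∀ i, mgf (fun ω ↦ Z i ω ^ 2) μ t = (1 - 2 * t) ^ (-(1 / 2 : ℝ)) := fun i ↦ by
    rw [← mgf_sq_gaussianReal ht, ← hgauss i, mgf_map (hmeas i).aemeasurable (by fun_prop)]
    rfl
  have hsum := hindep.sq.mgf_sum (t := t) (fun i ↦ (hmeas i).pow_const 2) univ
  rw [Finset.sum_fn] at hsum
  rw [hsum, Finset.prod_congr rfl fun i _ ↦ hsq i, prod_const, card_univ, ← rpow_natCast,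
    ← rpow_mul (by linarith)]
  ring_nf

lemma integral_sum_sq_mul_exp (hmeas : ∀ i, Measurable (Z i)) (hindep : iIndepFun Z μ)
    (hgauss : ∀ i, μ.map (Z i) = gaussianReal 0 1) (ht : t < 1 / 2) :
    μ[fun ω ↦ (∑ i, Z i ω ^ 2) * exp (t * ∑ i, Z i ω ^ 2)] =
      Fintype.card ι * (1 - 2 * t) ^ (-(Fintype.card ι / 2 : ℝ) - 1) := by
  have hmgf : mgf (fun ω ↦ ∑ i, Z i ω ^ 2) μ =ᶠ[𝓝 t]
      fun u ↦ (1 - 2 * u) ^ (-(Fintype.card ι / 2 : ℝ)) :=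
    Filter.eventually_of_mem (Iio_mem_nhds ht) fun u hu ↦ mgf_sum_sq hmeas hindep hgauss hu
  have hderiv : HasDerivAt (fun u ↦ (1 - 2 * u) ^ (-(Fintype.card ι / 2 : ℝ)))
      (Fintype.card ι * (1 - 2 * t) ^ (-(Fintype.card ι / 2 : ℝ) - 1)) t := by
    convert (((hasDerivAt_id' t).const_mul 2).const_sub 1).rpow_const
      (p := -(Fintype.card ι / 2 : ℝ)) (Or.inl (by linarith)) using 1
    ring
  exact (hasDerivAt_mgf (mem_interior_integrableExpSet_sum_sq hmeas hindep hgauss ht)).unique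
    (hmgf.hasDerivAt_iff.2 hderiv)

end ProbabilityTheory

/-- Chi-squared truncated-mean bound: if `X = ∑_{i<L} Z_i²` with `Z_i` i.i.d. standard
normal (`X ~ χ²_L`) and `λ > 1`, then
`E[X · 1{X ≥ λL}] ≤ λL · exp(-(L/2)(λ - log λ - 1))`. -/
theorem stmt6 (L : ℕ) (lam : ℝ) (hlam : 1 < lam)
    (Ω : Type) (_ : MeasurableSpace Ω) (μ : Measure Ω)
    (Z : Fin L → Ω → ℝ) (hmeas : ∀ i, Measurable (Z i))
    (hindep : iIndepFun Z μ)
    (hgauss : ∀ i, Measure.map (Z i) μ = gaussianReal 0 1) :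
    ∫ ω in {ω | lam * L ≤ ∑ i, (Z i ω) ^ 2}, (∑ i, (Z i ω) ^ 2) ∂μ ≤
      lam * L * Real.exp (-(L / 2 : ℝ) * (lam - Real.log lam - 1)) := by
  have hlam0 : 0 < lam := by linarith
  set s := (lam - 1) / (2 * lam)
  have hs0 : 0 ≤ s := div_nonneg (by linarith) (by linarith)
  have hs_lam : 2 * s * lam = lam - 1 := by simp only [s]; field_simp
  have hs : 1 - 2 * s = lam⁻¹ := by field_simp; linarith
  have hs_lt : s < 1 / 2 := by linarith [inv_pos.2 hlam0]
  have hint := integrable_pow_mul_exp_of_mem_interior_integrableExpSet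
    (mem_interior_integrableExpSet_sum_sq hmeas hindep hgauss (t := s) hs_lt) 1
  simp only [pow_one] at hint
  have hpow : lam⁻¹ ^ (-(L / 2 : ℝ) - 1) = lam * exp (L / 2 * log lam) := by
    rw [inv_rpow hlam0.le, ← rpow_neg hlam0.le, neg_sub, sub_neg_eq_add, rpow_add hlam0, rpow_one,
      rpow_def_of_pos hlam0]
    ring_nf
  calc ∫ ω in {ω | lam * L ≤ ∑ i, (Z i ω) ^ 2}, (∑ i, (Z i ω) ^ 2) ∂μ
      ≤ exp (-(s * (lam * L))) * μ[fun ω ↦ (∑ i, Z i ω ^ 2) * exp (s * ∑ i, Z i ω ^ 2)] :=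
        setIntegral_le_exp_mul_integral_mul_exp (by fun_prop)
          (fun ω ↦ sum_nonneg fun i _ ↦ sq_nonneg (Z i ω)) hs0 _ hint
    _ = exp (-(s * (lam * L))) * (L * (lam * exp (L / 2 * log lam))) := by
        rw [integral_sum_sq_mul_exp hmeas hindep hgauss hs_lt, Fintype.card_fin, hs, hpow]
    _ = lam * L * exp (-(L / 2 : ℝ) * (lam - log lam - 1)) := by
        rw [show -(L / 2 : ℝ) * (lam - log lam - 1) = -(s * (lam * L)) + L / 2 * log lam by
          linear_combination (L / 2 : ℝ) * hs_lam, exp_add]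
        ring
end

section
/- Suppose y_i = θ_i + z_i for i = 1,...,L, where θ_i are constants and z_i are random variables. Let S² = ∑_{i=1}^L y_i², λ > 0, and θ̂_i = (1 - λL/S²)_+ y_i. Then E‖θ̂ - θ‖₂² ≤ min(‖θ‖₂², 4λL) + 4 E[‖z‖₂² · 1{‖z‖₂² > λL}]. -/
open Real MeasureTheory Finset

/-! Pointwise in `ω` this is a deterministic inequality for the positive-part James–Stein
estimator `θ̂ = (1 - a/‖y‖²)₊ y` with `y = θ + w` and `a = λL`. Shrinkage moves `y` by at most
`√a`, so `‖θ̂ - θ‖² ≤ 2a + 2‖w‖²`, which is at most `4‖w‖²` when `‖w‖² > a` and at most `4a`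
otherwise. When `‖w‖² ≤ a` one also has `‖θ̂ - θ‖² ≤ ‖θ‖²`: either `θ̂ = 0`, or
`‖θ̂ - θ‖² - ‖θ‖² = (1 - a/‖y‖²)(2⟪y, w⟫ - ‖y‖² - a) ≤ 0`. Integrating gives the theorem. -/

lemma norm_add_sq_le_two_mul {E : Type*} [SeminormedAddCommGroup E] (u v : E) :
    ‖u + v‖ ^ 2 ≤ 2 * (‖u‖ ^ 2 + ‖v‖ ^ 2) :=
  (pow_le_pow_left₀ (norm_nonneg _) (norm_add_le u v) 2).trans add_sq_le

section JamesStein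

variable {E : Type*} [NormedAddCommGroup E] [NormedSpace ℝ E]

noncomputable def jamesStein (a : ℝ) (y : E) : E :=
  max (1 - a / ‖y‖ ^ 2) 0 • y

variable {a : ℝ} {y : E}

lemma jamesStein_of_norm_sq_le (h : ‖y‖ ^ 2 ≤ a) : jamesStein a y = 0 := by
  rcases eq_or_ne y 0 with rfl | hy
  · simp [jamesStein]
  have hS : 0 < ‖y‖ ^ 2 := by positivity
  have : 1 ≤ a / ‖y‖ ^ 2 := (one_le_div hS).2 h
  simp [jamesStein, max_eq_right (by linarith : 1 - a / ‖y‖ ^ 2 ≤ 0)]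

lemma jamesStein_sub_self_of_lt_norm_sq (ha : 0 ≤ a) (h : a < ‖y‖ ^ 2) :
    jamesStein a y - y = -(a / ‖y‖ ^ 2) • y := by
  have : a / ‖y‖ ^ 2 < 1 := (div_lt_one (ha.trans_lt h)).2 h
  rw [jamesStein, max_eq_left (by linarith), sub_smul, one_smul, neg_smul]
  abel

lemma norm_jamesStein_sub_self_sq_le (ha : 0 ≤ a) (y : E) :
    ‖jamesStein a y - y‖ ^ 2 ≤ a := by
  rcases le_or_gt (‖y‖ ^ 2) a with h | h
  · simpa [jamesStein_of_norm_sq_le h] using h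
  have hS : 0 < ‖y‖ ^ 2 := ha.trans_lt h
  have hc : a / ‖y‖ ^ 2 ≤ 1 := (div_le_one hS).2 h.le
  calc ‖jamesStein a y - y‖ ^ 2 = a * (a / ‖y‖ ^ 2) := by
        rw [jamesStein_sub_self_of_lt_norm_sq ha h, norm_smul, mul_pow, norm_neg,
          Real.norm_eq_abs, sq_abs]
        field_simp
    _ ≤ a := mul_le_of_le_one_right ha hc

lemma norm_jamesStein_add_sub_sq_le (ha : 0 ≤ a) (θ w : E) :
    ‖jamesStein a (θ + w) - θ‖ ^ 2 ≤ 2 * (a + ‖w‖ ^ 2) := by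
  have hsplit : jamesStein a (θ + w) - θ = (jamesStein a (θ + w) - (θ + w)) + w := by abel
  rw [hsplit]
  exact (norm_add_sq_le_two_mul _ _).trans (by gcongr; exact norm_jamesStein_sub_self_sq_le ha _)

variable {F : Type*} [NormedAddCommGroup F] [InnerProductSpace ℝ F]

lemma norm_jamesStein_add_sub_sq_le_norm_sq (ha : 0 ≤ a) (θ w : F) (hw : ‖w‖ ^ 2 ≤ a) :
    ‖jamesStein a (θ + w) - θ‖ ^ 2 ≤ ‖θ‖ ^ 2 := by
  set y := θ + w
  rcases le_or_gt (‖y‖ ^ 2) a with h | h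
  · simp [jamesStein_of_norm_sq_le h]
  have hS : 0 < ‖y‖ ^ 2 := ha.trans_lt h
  set c := a / ‖y‖ ^ 2
  have hc : c < 1 := (div_lt_one hS).2 h
  have hcS : c * ‖y‖ ^ 2 = a := div_mul_cancel₀ a hS.ne'
  have hθ : θ = y - w := by simp [y]
  have hdiff : jamesStein a y - θ = w - c • y := by
    rw [hθ, ← sub_add, jamesStein_sub_self_of_lt_norm_sq ha h, neg_smul]; abel
  have hP : 2 * inner ℝ y w ≤ ‖y‖ ^ 2 + ‖w‖ ^ 2 := by
    nlinarith [norm_sub_sq_real y w, sq_nonneg ‖y - w‖]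
  rw [hdiff, hθ, norm_sub_sq_real, norm_sub_sq_real, norm_smul, mul_pow, Real.norm_eq_abs,
    sq_abs, real_inner_smul_right, real_inner_comm]
  nlinarith [mul_nonneg (sub_nonneg.2 hc.le) (by linarith : 0 ≤ ‖y‖ ^ 2 + a - 2 * inner ℝ y w)]

lemma norm_jamesStein_add_sub_sq_le_min_add (ha : 0 ≤ a) (θ w : F) :
    ‖jamesStein a (θ + w) - θ‖ ^ 2 ≤
      min (‖θ‖ ^ 2) (4 * a) + if a < ‖w‖ ^ 2 then 4 * ‖w‖ ^ 2 else 0 := by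
  have hcoarse := norm_jamesStein_add_sub_sq_le ha θ w
  split_ifs with hw
  · have : 0 ≤ min (‖θ‖ ^ 2) (4 * a) := le_min (by positivity) (by positivity)
    linarith
  · rw [add_zero]
    exact le_min (norm_jamesStein_add_sub_sq_le_norm_sq ha θ w (not_lt.1 hw)) (by linarith)

end JamesStein

lemma norm_jamesStein_toLp_sub_sq {ι : Type*} [Fintype ι] (a : ℝ) (θ w : ι → ℝ) :
    ‖jamesStein a (WithLp.toLp 2 (θ + w)) - WithLp.toLp 2 θ‖ ^ 2 =
      ∑ i, ((max (1 - a / ∑ j, (θ j + w j) ^ 2) 0) * (θ i + w i) - θ i) ^ 2 := by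
  simp [jamesStein, EuclideanSpace.real_norm_sq_eq, mul_add]

lemma integral_le_const_add_setIntegral {Ω : Type*} [MeasurableSpace Ω] {μ : Measure Ω}
    [IsProbabilityMeasure μ] {f g : Ω → ℝ} {s : Set Ω} {C : ℝ} (hs : NullMeasurableSet s μ)
    (hf : 0 ≤ f) (hg : Integrable g μ) (hfg : ∀ ω, f ω ≤ C + s.indicator g ω) :
    ∫ ω, f ω ∂μ ≤ C + ∫ ω in s, g ω ∂μ := by
  have hbound : Integrable (fun ω => C + s.indicator g ω) μ :=
    (integrable_const C).add (hg.indicator₀ hs)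
  calc ∫ ω, f ω ∂μ ≤ ∫ ω, (C + s.indicator g ω) ∂μ :=
        integral_mono_of_nonneg (.of_forall hf) hbound (.of_forall hfg)
    _ = C + ∫ ω in s, g ω ∂μ := by
        rw [integral_add (integrable_const C) (hg.indicator₀ hs), integral_const,
          probReal_univ, one_smul, integral_indicator₀ hs]

/-- Oracle inequality for the block James–Stein estimator: with `y = θ + z`,
`S² = ∑ yᵢ²` and `θ̂ᵢ = (1 - λL/S²)₊ yᵢ`, one has
`E‖θ̂ - θ‖₂² ≤ min(‖θ‖₂², 4λL) + 4 E[‖z‖₂² 1{‖z‖₂² > λL}]`. -/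
theorem stmt7 (L : ℕ) (lam : ℝ) (hlam : 0 < lam)
    (Ω : Type) (_ : MeasurableSpace Ω) (μ : Measure Ω) (_ : IsProbabilityMeasure μ)
    (θ : Fin L → ℝ) (z : Fin L → Ω → ℝ)
    (hint : Integrable (fun ω => ∑ i, (z i ω) ^ 2) μ) :
    (∫ ω, ∑ i,
        ((max (1 - lam * L / ∑ j, (θ j + z j ω) ^ 2) 0) * (θ i + z i ω) - θ i) ^ 2 ∂μ) ≤
      min (∑ i, (θ i) ^ 2) (4 * lam * L) +
        4 * ∫ ω in {ω | lam * L < ∑ i, (z i ω) ^ 2}, (∑ i, (z i ω) ^ 2) ∂μ := by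
  have ha : 0 ≤ lam * L := by positivity
  rw [← integral_const_mul, mul_assoc]
  refine integral_le_const_add_setIntegral (nullMeasurableSet_lt aemeasurable_const
    hint.aemeasurable) (fun ω => by positivity) (hint.const_mul 4) fun ω => ?_
  have h := norm_jamesStein_add_sub_sq_le_min_add ha (WithLp.toLp 2 θ)
    (WithLp.toLp 2 (fun i => z i ω))
  rw [← WithLp.toLp_add, norm_jamesStein_toLp_sub_sq] at h
  simpa [EuclideanSpace.real_norm_sq_eq, Set.indicator_apply] using h
end

section
/- Let h be a density with ∫|x|^{ε₃} h(x) dx < ∞ for some ε₃ > 0 (so P(|ξ| ≥ |x|) ≤ C|x|^{-ε₃}). Then for every fixed l ≥ 1 there exists D_l such that the median η of m = 2v+1 i.i.d. observations with density h satisfies E|√m η|^{2l} ≤ D_l m^l, i.e., E|η|^{2l} ≤ D_l, uniformly in all large v. -/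
open Real MeasureTheory ProbabilityTheory Finset

/-- The sample median of `n` values: the `(k+1)`-st smallest value (index `k` from 0). -/
noncomputable def sampleMedian {n : ℕ} (k : ℕ) (v : Fin n → ℝ) : ℝ :=
  ((Multiset.map v Finset.univ.val).sort (· ≤ ·)).getD k 0

/-!
If the median of `2v+1` observations satisfies `|η| ≥ t`, then so do at least `v+1` of the
observations. By independence and Markov's inequality `P(|ξ| ≥ t) ≤ c t^(-ε₃)`, with
`c = ∫ |x|^ε₃ h(x) dx`, this has probability at most
`C(2v+1, v+1) (c t^(-ε₃))^(v+1) ≤ (4c t^(-ε₃))^(v+1)`.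
A probability is also at most `1`, so for `v ≥ v₀` the bound weakens to `(4c t^(-ε₃))^(v₀+1)`,
which no longer depends on `v`; once `ε₃ (v₀+1) > 2l+1` this tail is summable against `t^(2l)`.
-/

open scoped ENNReal

namespace List

variable {L : List ℝ} {k : ℕ} {t : ℝ}

theorem length_sub_le_countP_of_le_getElem (hL : L.Pairwise (· ≤ ·)) (hk : k < L.length)
    (ht : t ≤ L[k]) : L.length - k ≤ L.countP (fun x => t ≤ x) := by
  have hdrop : ∀ x ∈ L.drop k, t ≤ x := by
    have hcons := hL.drop (i := k)
    rw [drop_eq_getElem_cons hk, pairwise_cons] at hcons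
    intro x hx
    rw [drop_eq_getElem_cons hk, mem_cons] at hx
    rcases hx with rfl | hx
    · exact ht
    · exact ht.trans (hcons.1 x hx)
  calc L.length - k = (L.drop k).countP (fun x => t ≤ x) := by
        rw [countP_eq_length.mpr (by simpa using hdrop), length_drop]
    _ ≤ L.countP (fun x => t ≤ x) := (drop_sublist k L).countP_le

theorem succ_le_countP_of_getElem_le (hL : L.Pairwise (· ≤ ·)) (hk : k < L.length)
    (ht : L[k] ≤ t) : k + 1 ≤ L.countP (fun x => x ≤ t) := by
  have hmem : L[k] ∈ L.drop k := by
    rw [drop_eq_getElem_cons hk]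
    exact mem_cons_self
  have htake : ∀ x ∈ L.take k, x ≤ t := by
    rw [← L.take_append_drop k, pairwise_append] at hL
    exact fun x hx => (hL.2.2 x hx _ hmem).trans ht
  have hpos : 0 < (L.drop k).countP (fun x => x ≤ t) :=
    countP_pos_iff.mpr ⟨L[k], hmem, by simpa using ht⟩
  rw [← L.take_append_drop k, countP_append, countP_eq_length.mpr (by simpa using htake),
    length_take, min_eq_left hk.le]
  omega

end List

section OrderStatistics

variable {n : ℕ} (f : Fin n → ℝ)

noncomputable def sortedValues : List ℝ :=
  (Multiset.map f univ.val).sort (· ≤ ·)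

theorem pairwise_sortedValues : (sortedValues f).Pairwise (· ≤ ·) :=
  Multiset.pairwise_sort _ _

theorem length_sortedValues : (sortedValues f).length = n := by
  simp [sortedValues]

theorem countP_sortedValues (p : ℝ → Prop) [DecidablePred p] :
    (sortedValues f).countP (fun x => p x) = #{i | p (f i)} := by
  rw [← Multiset.coe_countP, sortedValues, Multiset.sort_eq, Multiset.countP_map]
  rfl

theorem sampleMedian_eq_getElem {k : ℕ} (hk : k < n) :
    sampleMedian k f = (sortedValues f)[k]'((length_sortedValues f).symm ▸ hk) :=
  List.getD_eq_getElem _ _ _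

variable {f} {k : ℕ} {t : ℝ}

theorem sub_le_card_filter_of_le_sampleMedian (hk : k < n) (ht : t ≤ sampleMedian k f) :
    n - k ≤ #{i | t ≤ f i} := by
  rw [sampleMedian_eq_getElem f hk] at ht
  have := List.length_sub_le_countP_of_le_getElem (pairwise_sortedValues f) _ ht
  rwa [length_sortedValues, countP_sortedValues f (t ≤ ·)] at this

theorem succ_le_card_filter_of_sampleMedian_le (hk : k < n) (ht : sampleMedian k f ≤ t) :
    k + 1 ≤ #{i | f i ≤ t} := by
  rw [sampleMedian_eq_getElem f hk] at ht
  have := List.succ_le_countP_of_getElem_le (pairwise_sortedValues f) _ ht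
  rwa [countP_sortedValues f (· ≤ t)] at this

theorem succ_le_card_filter_le_abs_of_le_abs_sampleMedian {v : ℕ} {f : Fin (2 * v + 1) → ℝ}
    (ht : t ≤ |sampleMedian v f|) : v + 1 ≤ #{i | t ≤ |f i|} := by
  rcases le_total 0 (sampleMedian v f) with hm | hm
  · rw [abs_of_nonneg hm] at ht
    calc v + 1 = 2 * v + 1 - v := by omega
      _ ≤ #{i | t ≤ f i} := sub_le_card_filter_of_le_sampleMedian (by omega) ht
      _ ≤ #{i | t ≤ |f i|} := card_le_card fun i => by
        simpa using fun h => h.trans (le_abs_self (f i))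
  · rw [abs_of_nonpos hm] at ht
    calc v + 1 ≤ #{i | f i ≤ -t} :=
          succ_le_card_filter_of_sampleMedian_le (by omega) (by linarith)
      _ ≤ #{i | t ≤ |f i|} := card_le_card fun i => by
        simpa using fun h => (le_neg.mp h).trans (neg_le_abs (f i))

end OrderStatistics

theorem measure_le_card_filter_le_choose_mul_pow {Ω ι β : Type*} [MeasurableSpace Ω]
    [MeasurableSpace β] [Fintype ι] {μ : Measure Ω} {X : ι → Ω → β} (hX : iIndepFun X μ)
    {P : β → Prop} [DecidablePred P] (hP : MeasurableSet {x | P x}) {p : ℝ≥0∞}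
    (hp : ∀ i, μ {ω | P (X i ω)} ≤ p) (k : ℕ) :
    μ {ω | k ≤ #{i | P (X i ω)}} ≤ (Fintype.card ι).choose k * p ^ k := by
  have hcover : {ω | k ≤ #{i | P (X i ω)}} ⊆
      ⋃ S ∈ powersetCard k (univ : Finset ι), ⋂ i ∈ S, X i ⁻¹' {x | P x} := by
    intro ω hω
    obtain ⟨S, hS, hcard⟩ := exists_subset_card_eq hω
    refine Set.mem_biUnion (mem_powersetCard.mpr ⟨subset_univ S, hcard⟩) ?_
    exact Set.mem_iInter₂.mpr fun i hi => (mem_filter.mp (hS hi)).2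
  calc μ {ω | k ≤ #{i | P (X i ω)}}
      ≤ ∑ S ∈ powersetCard k (univ : Finset ι), μ (⋂ i ∈ S, X i ⁻¹' {x | P x}) :=
        (measure_mono hcover).trans (measure_biUnion_finset_le _ _)
    _ ≤ ∑ S ∈ powersetCard k (univ : Finset ι), p ^ k := by
        refine sum_le_sum fun S hS => ?_
        rw [hX.measure_inter_preimage_eq_mul S fun _ _ => hP,
          ← (mem_powersetCard.mp hS).2, ← prod_const]
        exact prod_le_prod' fun i _ => hp i
    _ = (Fintype.card ι).choose k * p ^ k := by
        rw [sum_const, card_powersetCard, card_univ, nsmul_eq_mul]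

theorem measure_abs_ge_le_rpow_mul_lintegral (ν : Measure ℝ) {ε t : ℝ} (hε : 0 ≤ ε)
    (ht : 0 < t) :
    ν {x | t ≤ |x|} ≤ ENNReal.ofReal (t ^ (-ε)) * ∫⁻ x, ENNReal.ofReal (|x| ^ ε) ∂ν := by
  have hmarkov := mul_meas_ge_le_lintegral₀
    ((continuous_abs.rpow_const fun _ => Or.inr hε).measurable.ennreal_ofReal.aemeasurable)
    (μ := ν) (ENNReal.ofReal (t ^ ε))
  have hsub : {x : ℝ | t ≤ |x|} ⊆ {x | ENNReal.ofReal (t ^ ε) ≤ ENNReal.ofReal (|x| ^ ε)} :=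
    fun x hx => ENNReal.ofReal_le_ofReal (rpow_le_rpow ht.le hx hε)
  have hinv : ENNReal.ofReal (t ^ (-ε)) * ENNReal.ofReal (t ^ ε) = 1 := by
    rw [← ENNReal.ofReal_mul (by positivity), ← rpow_add ht, neg_add_cancel, rpow_zero,
      ENNReal.ofReal_one]
  calc ν {x | t ≤ |x|}
      = ENNReal.ofReal (t ^ (-ε)) * (ENNReal.ofReal (t ^ ε) * ν {x | t ≤ |x|}) := by
        rw [← mul_assoc, hinv, one_mul]
    _ ≤ _ := by gcongr; exact (mul_le_mul_right (measure_mono hsub) _).trans hmarkov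

theorem withDensity_abs_ge_le {h : ℝ → ℝ} (hmeas : Measurable h) (hnn : ∀ x, 0 ≤ h x)
    {ε : ℝ} (hε : 0 ≤ ε) (hint : Integrable (fun x => |x| ^ ε * h x)) {t : ℝ} (ht : 0 < t) :
    volume.withDensity (fun x => ENNReal.ofReal (h x)) {x | t ≤ |x|}
      ≤ ENNReal.ofReal ((∫ x, |x| ^ ε * h x) * t ^ (-ε)) := by
  have hmoment : ∫⁻ x, ENNReal.ofReal (|x| ^ ε)
        ∂volume.withDensity (fun x => ENNReal.ofReal (h x))
      = ENNReal.ofReal (∫ x, |x| ^ ε * h x) := by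
    rw [lintegral_withDensity_eq_lintegral_mul _ hmeas.ennreal_ofReal
      (continuous_abs.rpow_const fun _ => Or.inr hε).measurable.ennreal_ofReal,
      ofReal_integral_eq_lintegral_ofReal hint
        (ae_of_all _ fun x => mul_nonneg (by positivity) (hnn x))]
    refine lintegral_congr fun x => ?_
    rw [Pi.mul_apply, ← ENNReal.ofReal_mul (hnn x), mul_comm]
  calc _ ≤ _ := measure_abs_ge_le_rpow_mul_lintegral _ hε ht
    _ = _ := by rw [hmoment, ← ENNReal.ofReal_mul (by positivity), mul_comm]

theorem le_pow_of_le_one_of_le_pow {a q : ℝ≥0∞} {m n : ℕ} (hmn : m ≤ n) (ha : a ≤ 1)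
    (haq : a ≤ q ^ n) : a ≤ q ^ m := by
  rcases le_total q 1 with hq | hq
  · exact haq.trans (pow_le_pow_right_of_le_one' hq hmn)
  · exact ha.trans (one_le_pow₀ hq)

theorem lintegral_ofReal_abs_pow_le {Ω : Type*} [MeasurableSpace Ω] (μ : Measure Ω)
    (Y : Ω → ℝ) (p : ℕ) :
    ∫⁻ ω, ENNReal.ofReal (|Y ω| ^ p) ∂μ
      ≤ μ Set.univ +
        ∑' n : ℕ, ENNReal.ofReal (((n : ℝ) + 2) ^ p) * μ {ω | (n : ℝ) + 1 ≤ |Y ω|} := by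
  -- `Y` need not be measurable: the level sets are replaced by measurable hulls of equal measure.
  set T : ℕ → Set Ω := fun n => toMeasurable μ {ω | (n : ℝ) + 1 ≤ |Y ω|}
  have hpt : ∀ ω, ENNReal.ofReal (|Y ω| ^ p)
      ≤ 1 + ∑' n : ℕ, ENNReal.ofReal (((n : ℝ) + 2) ^ p) * (T n).indicator 1 ω := by
    intro ω
    rcases lt_or_ge |Y ω| 1 with hy | hy
    · refine le_trans ?_ le_self_add
      exact ENNReal.ofReal_le_one.mpr (pow_le_one₀ (abs_nonneg _) hy.le)
    refine le_trans ?_ le_add_self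
    set n := ⌊|Y ω|⌋₊ - 1
    have hn : (n : ℝ) + 1 = ⌊|Y ω|⌋₊ := by
      have : 1 ≤ ⌊|Y ω|⌋₊ := Nat.one_le_floor_iff _ |>.mpr hy
      rw [Nat.cast_sub this]; ring
    have hmem : ω ∈ T n := subset_toMeasurable _ _ (by
      simpa only [Set.mem_ofPred_eq, hn] using Nat.floor_le (abs_nonneg (Y ω)))
    refine le_trans ?_ (ENNReal.le_tsum n)
    rw [Set.indicator_of_mem hmem, Pi.one_apply, mul_one]
    refine ENNReal.ofReal_le_ofReal (pow_le_pow_left₀ (abs_nonneg _) ?_ p)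
    linarith [Nat.lt_floor_add_one |Y ω|]
  calc ∫⁻ ω, ENNReal.ofReal (|Y ω| ^ p) ∂μ
      ≤ ∫⁻ ω, 1 + ∑' n : ℕ, ENNReal.ofReal (((n : ℝ) + 2) ^ p) * (T n).indicator 1 ω ∂μ :=
        lintegral_mono hpt
    _ = _ := by
        rw [lintegral_add_left measurable_const, lintegral_const, one_mul, lintegral_tsum fun n =>
          ((measurable_one.indicator (measurableSet_toMeasurable _ _)).const_mul _).aemeasurable]
        congr 1
        refine tsum_congr fun n => ?_
        rw [lintegral_const_mul _ (measurable_one.indicator (measurableSet_toMeasurable _ _)),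
          lintegral_indicator_one (measurableSet_toMeasurable _ _), measure_toMeasurable]

theorem summable_add_two_pow_mul_add_one_rpow_neg {p : ℕ} {q : ℝ} (hq : p + 1 < q) :
    Summable fun n : ℕ => ((n : ℝ) + 2) ^ p * ((n : ℝ) + 1) ^ (-q) := by
  have hdom : Summable fun n : ℕ => 2 ^ p * ((n : ℝ) + 1) ^ ((p : ℝ) - q) := by
    refine Summable.mul_left _ ?_
    have hp : (p : ℝ) - q < -1 := by linarith
    simpa using (summable_nat_add_iff 1).mpr (Real.summable_nat_rpow.mpr hp)
  refine hdom.of_nonneg_of_le (fun n => by positivity) fun n => ?_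
  calc ((n : ℝ) + 2) ^ p * ((n : ℝ) + 1) ^ (-q)
      ≤ (2 * ((n : ℝ) + 1)) ^ p * ((n : ℝ) + 1) ^ (-q) := by gcongr; linarith
    _ = 2 ^ p * ((n : ℝ) + 1) ^ ((p : ℝ) - q) := by
        rw [mul_pow, mul_assoc, sub_eq_add_neg, rpow_add (by positivity), rpow_natCast]

theorem integral_abs_pow_le_of_tail_le {Ω : Type*} [MeasurableSpace Ω] {μ : Measure Ω}
    [IsProbabilityMeasure μ] {Y : Ω → ℝ} {p : ℕ} {q K : ℝ} (hq : p + 1 < q) (hK : 0 ≤ K)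
    (htail : ∀ t : ℝ, 1 ≤ t → μ {ω | t ≤ |Y ω|} ≤ ENNReal.ofReal (K * t ^ (-q))) :
    ∫ ω, |Y ω| ^ p ∂μ ≤ 1 + K * ∑' n : ℕ, ((n : ℝ) + 2) ^ p * ((n : ℝ) + 1) ^ (-q) := by
  have hsum := summable_add_two_pow_mul_add_one_rpow_neg hq
  have hlint : ∫⁻ ω, ENNReal.ofReal (|Y ω| ^ p) ∂μ
      ≤ ENNReal.ofReal (1 + K * ∑' n : ℕ, ((n : ℝ) + 2) ^ p * ((n : ℝ) + 1) ^ (-q)) := by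
    calc ∫⁻ ω, ENNReal.ofReal (|Y ω| ^ p) ∂μ
        ≤ μ Set.univ + ∑' n : ℕ, ENNReal.ofReal (((n : ℝ) + 2) ^ p)
            * μ {ω | (n : ℝ) + 1 ≤ |Y ω|} := lintegral_ofReal_abs_pow_le μ Y p
      _ ≤ 1 + ∑' n : ℕ, ENNReal.ofReal (K * (((n : ℝ) + 2) ^ p * ((n : ℝ) + 1) ^ (-q))) := by
        rw [measure_univ]
        gcongr with n
        rw [mul_left_comm, ENNReal.ofReal_mul (by positivity)]
        gcongr
        exact htail _ (by linarith [n.cast_nonneg (α := ℝ)])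
      _ = _ := by
        rw [← ENNReal.ofReal_tsum_of_nonneg (fun n => by positivity) (hsum.mul_left K),
          tsum_mul_left, ← ENNReal.ofReal_one, ← ENNReal.ofReal_add zero_le_one (by positivity)]
  calc ∫ ω, |Y ω| ^ p ∂μ ≤ ‖∫ ω, |Y ω| ^ p ∂μ‖ := le_norm_self _
    _ ≤ (∫⁻ ω, ENNReal.ofReal ‖|Y ω| ^ p‖ ∂μ).toReal := norm_integral_le_lintegral_norm _
    _ ≤ _ := by
        simp only [norm_pow, norm_abs_eq_norm, Real.norm_eq_abs]
        exact ENNReal.toReal_le_of_le_ofReal (by positivity) hlint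

theorem measure_le_abs_sampleMedian_le {Ω : Type*} [MeasurableSpace Ω] {μ : Measure Ω} {v : ℕ}
    {X : Fin (2 * v + 1) → Ω → ℝ} (hX : iIndepFun X μ) {t : ℝ} {p : ℝ≥0∞}
    (hp : ∀ i, μ {ω | t ≤ |X i ω|} ≤ p) :
    μ {ω | t ≤ |sampleMedian v fun i => X i ω|} ≤ (4 * p) ^ (v + 1) := by
  have hchoose : ((2 * v + 1).choose (v + 1) : ℝ≥0∞) ≤ 4 ^ (v + 1) := by
    rw [Nat.choose_symm_half]
    calc ((2 * v + 1).choose v : ℝ≥0∞) ≤ 4 ^ v := by exact_mod_cast Nat.choose_middle_le_pow v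
      _ ≤ 4 ^ (v + 1) := pow_le_pow_right₀ (by norm_num) v.le_succ
  calc μ {ω | t ≤ |sampleMedian v fun i => X i ω|}
      ≤ μ {ω | v + 1 ≤ #{i | t ≤ |X i ω|}} :=
        measure_mono fun ω => succ_le_card_filter_le_abs_of_le_abs_sampleMedian
    _ ≤ (2 * v + 1).choose (v + 1) * p ^ (v + 1) := by
        simpa using measure_le_card_filter_le_choose_mul_pow hX
          (measurableSet_le measurable_const measurable_abs) hp (v + 1)
    _ ≤ (4 * p) ^ (v + 1) := by rw [mul_pow]; gcongr

/-- Finite moments of the sample median under a weak tail condition: if the density `h`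
satisfies `∫ |x|^{ε₃} h(x) dx < ∞` for some `ε₃ > 0`, then for every `l ≥ 1` there is a
constant `D_l` bounding `E|η|^{2l}` for the median `η` of `m = 2v+1` i.i.d. observations,
uniformly over all large `v`. -/
theorem stmt15 (h : ℝ → ℝ) (hmeas : Measurable h) (hnn : ∀ x, 0 ≤ h x)
    (ε₃ : ℝ) (hε₃ : 0 < ε₃)
    (htail : Integrable (fun x => |x| ^ ε₃ * h x) volume) :
    ∀ l : ℕ, 1 ≤ l → ∃ D : ℝ, ∃ v₀ : ℕ, ∀ v : ℕ, v₀ ≤ v →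
      ∀ (Ω : Type) (_ : MeasurableSpace Ω) (μ : Measure Ω)
        (_ : IsProbabilityMeasure μ) (X : Fin (2 * v + 1) → Ω → ℝ),
        (∀ i, Measurable (X i)) →
        iIndepFun X μ →
        (∀ i, Measure.map (X i) μ =
          volume.withDensity fun x => ENNReal.ofReal (h x)) →
        ∫ ω, |sampleMedian v (fun i => X i ω)| ^ (2 * l) ∂μ ≤ D := by
  intro l _
  set c := ∫ x, |x| ^ ε₃ * h x
  have hc : 0 ≤ c := integral_nonneg fun x => mul_nonneg (by positivity) (hnn x)
  obtain ⟨v₀, hv₀⟩ := exists_nat_gt ((2 * l + 1) / ε₃)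
  have hq : ((2 * l : ℕ) : ℝ) + 1 < ε₃ * (v₀ + 1) := by
    rw [div_lt_iff₀ hε₃] at hv₀
    push_cast
    nlinarith
  refine ⟨_, v₀, fun v hv Ω _ μ _ X hXm hX hlaw =>
    integral_abs_pow_le_of_tail_le hq (by positivity : 0 ≤ (4 * c) ^ (v₀ + 1)) fun t ht => ?_⟩
  have ht0 : 0 < t := by linarith
  have hcoord : ∀ i, μ {ω | t ≤ |X i ω|} ≤ ENNReal.ofReal (c * t ^ (-ε₃)) := fun i => by
    change μ (X i ⁻¹' {x | t ≤ |x|}) ≤ _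
    rw [← Measure.map_apply (hXm i)
      (measurableSet_le measurable_const measurable_abs), hlaw i]
    exact withDensity_abs_ge_le hmeas hnn hε₃.le htail ht0
  have hpow : (4 * (c * t ^ (-ε₃))) ^ (v₀ + 1) = (4 * c) ^ (v₀ + 1) * t ^ (-(ε₃ * (v₀ + 1))) := by
    rw [← mul_assoc, mul_pow, ← rpow_natCast (t ^ _), ← rpow_mul ht0.le]
    push_cast
    ring_nf
  calc μ {ω | t ≤ |sampleMedian v fun i => X i ω|}
      ≤ ENNReal.ofReal (4 * (c * t ^ (-ε₃))) ^ (v₀ + 1) := by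
        refine le_pow_of_le_one_of_le_pow (n := v + 1) (by omega) prob_le_one ?_
        rw [ENNReal.ofReal_mul (by norm_num), ENNReal.ofReal_ofNat]
        exact measure_le_abs_sampleMedian_le hX hcoord
    _ = _ := by rw [← ENNReal.ofReal_pow (by positivity), hpow]
end
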